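/- The fundamental representation π₂ is irreducible: every ℚ(q)-linear subspace V ⊆ F satisfying π₂(t_{ij})(V) ⊆ V for all 1 ≤ i,j ≤ 7 is either {0} or all of F. -/

import Mathlib

open TensorProduct

noncomputable section

abbrev Fq : Type := RatFunc ℚ

def q : Fq := RatFunc.X

abbrev F : Type := ℕ →₀ Fq

def ket (m : ℕ) : F := Finsupp.single m 1

/-- Linear operator on the Fock space from its action on the basis. -/
def opOf (v : ℕ → F) : F →ₗ[Fq] F := Finsupp.lift F Fq ℕ v

/-- q²-oscillator K -/
def K2 : F →ₗ[Fq] F := opOf fun m => q ^ (2 * m) • ket m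
/-- q²-oscillator A⁺ -/
def Ap : F →ₗ[Fq] F := opOf fun m => ket (m + 1)
/-- q²-oscillator A⁻ -/
def Am : F →ₗ[Fq] F := opOf fun m => (1 - q ^ (4 * m)) • ket (m - 1)
/-- q-oscillator k -/
def kk : F →ₗ[Fq] F := opOf fun m => q ^ m • ket m
/-- q-oscillator a⁺ -/
def ap : F →ₗ[Fq] F := opOf fun m => ket (m + 1)
/-- q-oscillator a⁻ -/
def am : F →ₗ[Fq] F := opOf fun m => (1 - q ^ (2 * m)) • ket (m - 1)

def pi1 (α β μ ν κ σ : Fq) : Matrix (Fin 7) (Fin 7) (F →ₗ[Fq] F) :=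
  !![μ • Am, α • K2, 0, 0, 0, 0, 0;
     β • K2, ν • Ap, 0, 0, 0, 0, 0;
     0, 0, κ • LinearMap.id, 0, 0, 0, 0;
     0, 0, 0, σ • LinearMap.id, 0, 0, 0;
     0, 0, 0, 0, κ⁻¹ • LinearMap.id, 0, 0;
     0, 0, 0, 0, 0, ν⁻¹ • Am, (q ^ 2 * β⁻¹) • K2;
     0, 0, 0, 0, 0, (q ^ 2 * α⁻¹) • K2, μ⁻¹ • Ap]

def pi2 (α β μ ν κ σ : Fq) : Matrix (Fin 7) (Fin 7) (F →ₗ[Fq] F) :=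
  !![κ • LinearMap.id, 0, 0, 0, 0, 0, 0;
     0, μ • Am, α • K2, 0, 0, 0, 0;
     0, β • K2, ν • Ap, 0, 0, 0, 0;
     0, 0, 0, σ • LinearMap.id, 0, 0, 0;
     0, 0, 0, 0, ν⁻¹ • Am, (q ^ 2 * β⁻¹) • K2, 0;
     0, 0, 0, 0, (q ^ 2 * α⁻¹) • K2, μ⁻¹ • Ap, 0;
     0, 0, 0, 0, 0, 0, κ⁻¹ • LinearMap.id]

def pi3 (α μ κa κb : Fq) : Matrix (Fin 7) (Fin 7) (F →ₗ[Fq] F) :=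
  !![κa • LinearMap.id, 0, 0, 0, 0, 0, 0;
     0, κb • LinearMap.id, 0, 0, 0, 0, 0;
     0, 0, μ • (am ∘ₗ am), α • (kk ∘ₗ am), (-((1 + q ^ 2) * μ)⁻¹ * α ^ 2) • (kk ∘ₗ kk), 0, 0;
     0, 0, (-(1 + q ^ 2) * α⁻¹ * μ) • (am ∘ₗ kk), am ∘ₗ ap - kk ∘ₗ kk, (-(q * μ)⁻¹ * α) • (kk ∘ₗ ap), 0, 0;
     0, 0, (-(1 + q ^ 2) * q ^ 2 * α⁻¹ ^ 2 * μ) • (kk ∘ₗ kk), ((1 + q ^ 2) * α⁻¹) • (kk ∘ₗ ap), μ⁻¹ • (ap ∘ₗ ap), 0, 0;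
     0, 0, 0, 0, 0, κb⁻¹ • LinearMap.id, 0;
     0, 0, 0, 0, 0, 0, κa⁻¹ • LinearMap.id]

def rhoB : Fin 7 → ℤ := ![5, 3, 1, 0, -1, -3, -5]

def CB : Matrix (Fin 7) (Fin 7) Fq := fun i j => if (i : ℕ) + (j : ℕ) = 6 then q ^ rhoB j else 0

/-!
The entries `μ A⁻`, `α K` and `ν A⁺` of `π₂` make an invariant subspace `V` stable under the
q²-oscillator operators. Since `K` is diagonal in the basis `|m⟩` with pairwise distinct
eigenvalues `q^{2m}`, `V` contains every basis vector occurring in one of its elements. From such a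
`|m⟩`, `A⁻` reaches `|0⟩` because `1 - q^{4k} ≠ 0`, and `A⁺` then produces the whole basis.
-/

section DiagonalInvariant

variable {ι K : Type*} [Field K] {V : Submodule K (ι →₀ K)} {T : Module.End K (ι →₀ K)}
  {d : ι → K}

/-- Each application of `T - d j` removes the coordinate `j` from the support and keeps `i`,
since `d i ≠ d j`. -/
theorem Submodule.single_mem_of_diagonal_invariant [DecidableEq ι] (hd : Function.Injective d)
    (hT : ∀ v j, T v j = d j * v j) (hV : ∀ v ∈ V, T v ∈ V) {i : ι} (S : Finset ι) :
    ∀ v ∈ V, i ∈ v.support → v.support ⊆ insert i S → Finsupp.single i 1 ∈ V := by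
  induction S using Finset.induction_on with
  | empty =>
    intro v hv hi hsupp
    obtain ⟨c, rfl⟩ := Finsupp.support_subset_singleton'.mp hsupp
    have hc : c ≠ 0 := by simpa using hi
    simpa [Finsupp.smul_single, hc] using V.smul_mem c⁻¹ hv
  | insert j S _ ih =>
    intro v hv hi hsupp
    by_cases hij : i = j
    · subst hij
      exact ih v hv hi (by simpa using hsupp)
    have hw : ∀ k, (T v - d j • v) k = (d k - d j) * v k := fun k => by
      simp [hT, sub_mul]
    refine ih (T v - d j • v) (V.sub_mem (hV v hv) (V.smul_mem _ hv)) ?_ ?_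
    · simpa [hw, sub_eq_zero, hd.ne hij] using hi
    · intro k hk
      have hk' : d k ≠ d j ∧ v k ≠ 0 := by simpa [hw, sub_eq_zero] using hk
      have := hsupp (Finsupp.mem_support_iff.mpr hk'.2)
      simp only [Finset.mem_insert] at this ⊢
      rcases this with h | h | h
      · exact .inl h
      · exact absurd (congrArg d h) hk'.1
      · exact .inr h

theorem Submodule.single_mem_of_mem_of_diagonal_invariant (hd : Function.Injective d)
    (hT : ∀ v j, T v j = d j * v j) (hV : ∀ v ∈ V, T v ∈ V) {v : ι →₀ K} (hv : v ∈ V)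
    {i : ι} (hi : i ∈ v.support) : Finsupp.single i 1 ∈ V := by
  classical
  exact single_mem_of_diagonal_invariant hd hT hV v.support v hv hi (Finset.subset_insert _ _)

end DiagonalInvariant

lemma opOf_single (v : ℕ → F) (m : ℕ) (c : Fq) : opOf v (Finsupp.single m c) = c • v m := by
  simp [opOf, Finsupp.lift_apply]

lemma opOf_ket (v : ℕ → F) (m : ℕ) : opOf v (ket m) = v m := by
  simp [ket, opOf_single]

lemma q_pow_injective : Function.Injective (fun n : ℕ => q ^ n) := by
  intro a b h
  have h' : algebraMap (Polynomial ℚ) Fq (Polynomial.X ^ a) =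
      algebraMap (Polynomial ℚ) Fq (Polynomial.X ^ b) := by
    simpa [RatFunc.algebraMap_X, q] using h
  simpa using congrArg Polynomial.natDegree (RatFunc.algebraMap_injective ℚ h')

lemma K2_apply (v : F) (n : ℕ) : K2 v n = q ^ (2 * n) * v n := by
  induction v using Finsupp.induction_linear with
  | zero => simp
  | add f g hf hg => simp [hf, hg, mul_add]
  | single m c =>
    rw [K2, opOf_single]
    by_cases h : m = n
    · subst h; simp [ket, mul_comm]
    · simp [ket, h]

lemma Ap_ket (m : ℕ) : Ap (ket m) = ket (m + 1) := opOf_ket _ m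

lemma Am_ket_succ (m : ℕ) : Am (ket (m + 1)) = (1 - q ^ (4 * (m + 1))) • ket m := opOf_ket _ _

lemma one_sub_q_pow_ne_zero {n : ℕ} (hn : n ≠ 0) : 1 - q ^ n ≠ 0 := by
  rw [sub_ne_zero, ne_comm, ← pow_zero q]
  exact q_pow_injective.ne hn

theorem eq_bot_or_top_of_oscillator_invariant (V : Submodule Fq F) (hK : ∀ v ∈ V, K2 v ∈ V)
    (hAp : ∀ v ∈ V, Ap v ∈ V) (hAm : ∀ v ∈ V, Am v ∈ V) : V = ⊥ ∨ V = ⊤ := by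
  refine or_iff_not_imp_left.mpr fun hV => ?_
  obtain ⟨v, hv, hv0⟩ := (Submodule.ne_bot_iff V).mp hV
  obtain ⟨m, hm⟩ := Finsupp.support_nonempty_iff.mpr hv0
  have hdistinct : Function.Injective fun n : ℕ => q ^ (2 * n) :=
    q_pow_injective.comp fun a b h => by simpa using h
  have hketm : ket m ∈ V :=
    V.single_mem_of_mem_of_diagonal_invariant hdistinct K2_apply hK hv hm
  have hket0 : ∀ n, ket n ∈ V → ket 0 ∈ V := fun n => by
    induction n with
    | zero => exact id
    | succ n ih =>
      intro h
      have := hAm _ h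
      rw [Am_ket_succ, V.smul_mem_iff (one_sub_q_pow_ne_zero (by omega))] at this
      exact ih this
  have hket : ∀ k, ket k ∈ V := fun k => by
    induction k with
    | zero => exact hket0 m hketm
    | succ n ih => simpa [Ap_ket] using hAp _ ih
  rw [Submodule.eq_top_iff']
  intro u
  induction u using Finsupp.induction_linear with
  | zero => exact V.zero_mem
  | add f g hf hg => exact V.add_mem hf hg
  | single k c => simpa [ket, Finsupp.smul_single] using V.smul_mem c (hket k)

theorem pi2_irreducible_general
    (α β μ ν κ σ : Fq) (hα : α ≠ 0) (hμ : μ ≠ 0) (hν : ν ≠ 0) :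
    ∀ V : Submodule Fq F,
      (∀ i j : Fin 7, ∀ v ∈ V, pi2 α β μ ν κ σ i j v ∈ V) → V = ⊥ ∨ V = ⊤ := by
  intro V hV
  refine eq_bot_or_top_of_oscillator_invariant V (fun v hv => ?_) (fun v hv => ?_) (fun v hv => ?_)
  · simpa [pi2, V.smul_mem_iff hα] using hV 1 2 v hv
  · simpa [pi2, V.smul_mem_iff hν] using hV 2 2 v hv
  · simpa [pi2, V.smul_mem_iff hμ] using hV 1 1 v hv

/-- the fundamental representation π₂ is irreducible. -/
theorem pi2_irreducible
    (α β μ ν κ σ : Fq) (hα : α ≠ 0) (hβ : β ≠ 0) (hμ : μ ≠ 0) (hν : ν ≠ 0)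
    (hκ : κ ≠ 0) (hσ0 : σ ≠ 0)
    (hrel : α * β = -q ^ 2 * (μ * ν)) (hσ : σ = 1 ∨ σ = -1) :
    ∀ V : Submodule Fq F,
      (∀ i j : Fin 7, ∀ v ∈ V, pi2 α β μ ν κ σ i j v ∈ V) → V = ⊥ ∨ V = ⊤ :=
  pi2_irreducible_general α β μ ν κ σ hα hμ hν
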